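/- Let p be the order k ≥ 1 Bernstein polynomial of ReLU on [a,b] with a < 0 < b, and let ε = p(0). Then for all x in [a,b], (p(x) − ε/2) − ε/2 ≤ ReLU(x) ≤ (p(x) − ε/2) + ε/2; i.e., the Taylor model (p − ε/2, [−ε/2, ε/2]) over-approximates ReLU on [a,b]. -/

import Mathlib

open Set

noncomputable def bern (f : ℝ → ℝ) (a b : ℝ) (k : ℕ) (x : ℝ) : ℝ :=
  ∑ i ∈ Finset.range (k + 1),
    f (a + (i / k : ℝ) * (b - a)) * (k.choose i : ℝ) *
      ((x - a) / (b - a)) ^ i * ((b - x) / (b - a)) ^ (k - i)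

noncomputable def relu (x : ℝ) : ℝ := max x 0

/-! The Bernstein operator `f ↦ bern f a b k` is positive, reproduces the identity (for `k ≠ 0`),
and preserves monotonicity, since the derivative of `∑ cᵢ bₙ₊₁,ᵢ` is `(n + 1) ∑ (cᵢ₊₁ - cᵢ) bₙ,ᵢ`.
Positivity applied to `0 ≤ relu` and `id ≤ relu` gives `relu ≤ p`. For `x ≤ 0`, monotonicity of `p`
gives `p x ≤ p 0 = ε`; for `0 ≤ x`, monotonicity of `x - p x`, the Bernstein polynomial of
`min · 0`, gives `p x - x ≤ p 0 = ε`. -/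

open Finset Polynomial

theorem derivative_sum_C_mul_bernsteinPolynomial {R : Type*} [CommRing R] (c : ℕ → R) (n : ℕ) :
    derivative (∑ i ∈ range (n + 2), C (c i) * bernsteinPolynomial R (n + 1) i) =
      (n + 1 : R[X]) * ∑ i ∈ range (n + 1), C (c (i + 1) - c i) * bernsteinPolynomial R n i := by
  have hshift : ∑ i ∈ range (n + 1), C (c (i + 1)) * bernsteinPolynomial R n (i + 1) =
      ∑ i ∈ range (n + 1), C (c i) * bernsteinPolynomial R n i -
        C (c 0) * bernsteinPolynomial R n 0 := by
    have h := sum_range_succ' (fun i => C (c i) * bernsteinPolynomial R n i) (n + 1)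
    rw [sum_range_succ, bernsteinPolynomial.eq_zero_of_lt R n.lt_succ_self, mul_zero,
      add_zero] at h
    rw [h, add_sub_cancel_right]
  rw [derivative_sum, sum_range_succ']
  simp only [derivative_C_mul, bernsteinPolynomial.derivative_succ_aux,
    bernsteinPolynomial.derivative_zero, Nat.add_sub_cancel, C_sub, sub_mul, sum_sub_distrib]
  push_cast
  have hsplit : ∑ i ∈ range (n + 1),
      C (c (i + 1)) * ((n + 1) * (bernsteinPolynomial R n i - bernsteinPolynomial R n (i + 1))) =
      (n + 1) * (∑ i ∈ range (n + 1), C (c (i + 1)) * bernsteinPolynomial R n i -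
        ∑ i ∈ range (n + 1), C (c (i + 1)) * bernsteinPolynomial R n (i + 1)) := by
    rw [mul_sub, mul_sum, mul_sum, ← sum_sub_distrib]
    exact sum_congr rfl fun _ _ => by ring
  rw [hsplit, hshift]
  ring

theorem bernsteinPolynomial_eval_nonneg {n ν : ℕ} {t : ℝ} (ht : t ∈ Icc (0 : ℝ) 1) :
    0 ≤ (bernsteinPolynomial ℝ n ν).eval t := by
  obtain ⟨ht0, ht1⟩ := ht
  have ht1' : 0 ≤ 1 - t := sub_nonneg.2 ht1
  simp only [bernsteinPolynomial, eval_mul, eval_pow, eval_sub, eval_one, eval_X, eval_natCast]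
  positivity

theorem monotoneOn_eval_sum_C_mul_bernsteinPolynomial {c : ℕ → ℝ} (hc : Monotone c) (n : ℕ) :
    MonotoneOn (fun t => (∑ i ∈ range (n + 1), C (c i) * bernsteinPolynomial ℝ n i).eval t)
      (Icc 0 1) := by
  cases n with
  | zero => simp [bernsteinPolynomial, monotoneOn_const]
  | succ n =>
    refine monotoneOn_of_deriv_nonneg (convex_Icc 0 1) (Polynomial.continuousOn _)
      (Polynomial.differentiableOn _) fun t ht => ?_
    rw [Polynomial.deriv, derivative_sum_C_mul_bernsteinPolynomial, eval_mul, eval_finsetSum]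
    refine mul_nonneg (by simp only [eval_add, eval_natCast, eval_one]; positivity)
      (sum_nonneg fun i _ => ?_)
    rw [eval_mul, eval_C]
    exact mul_nonneg (sub_nonneg.2 (hc i.le_succ))
      (bernsteinPolynomial_eval_nonneg (interior_subset ht))

theorem bern_eq_eval (f : ℝ → ℝ) {a b : ℝ} (hab : a ≠ b) (k : ℕ) (x : ℝ) :
    bern f a b k x = (∑ i ∈ range (k + 1),
      C (f (a + (i / k : ℝ) * (b - a))) * bernsteinPolynomial ℝ k i).eval ((x - a) / (b - a)) := by
  have hba : b - a ≠ 0 := sub_ne_zero.2 hab.symm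
  have hflip : (b - x) / (b - a) = 1 - (x - a) / (b - a) := by field_simp; ring
  simp only [bern, eval_finsetSum, bernsteinPolynomial, eval_mul, eval_C, eval_pow, eval_sub,
    eval_one, eval_X, eval_natCast, hflip, mul_assoc]

theorem bern_sub (f g : ℝ → ℝ) (a b : ℝ) (k : ℕ) (x : ℝ) :
    bern (fun y => f y - g y) a b k x = bern f a b k x - bern g a b k x := by
  simp only [bern, ← sum_sub_distrib, sub_mul]

theorem bern_nonneg {f : ℝ → ℝ} (hf : ∀ y, 0 ≤ f y) {a b : ℝ} (k : ℕ) {x : ℝ}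
    (hx : x ∈ Icc a b) : 0 ≤ bern f a b k x := by
  obtain ⟨hax, hxb⟩ := hx
  have hx0 : 0 ≤ (x - a) / (b - a) := div_nonneg (by linarith) (by linarith)
  have hx1 : 0 ≤ (b - x) / (b - a) := div_nonneg (by linarith) (by linarith)
  exact sum_nonneg fun i _ => by have := hf (a + (i / k : ℝ) * (b - a)); positivity

theorem bern_le_bern {f g : ℝ → ℝ} (hfg : ∀ y, f y ≤ g y) {a b : ℝ} (k : ℕ) {x : ℝ}
    (hx : x ∈ Icc a b) : bern f a b k x ≤ bern g a b k x :=
  sub_nonneg.1 <| bern_sub g f a b k x ▸ bern_nonneg (fun y => sub_nonneg.2 (hfg y)) k hx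

theorem bern_id {a b : ℝ} (hab : a ≠ b) {k : ℕ} (hk : k ≠ 0) (x : ℝ) :
    bern (fun y => y) a b k x = x := by
  have hba : b - a ≠ 0 := sub_ne_zero.2 hab.symm
  have hsum : ∑ i ∈ range (k + 1), C (a + (i / k : ℝ) * (b - a)) * bernsteinPolynomial ℝ k i =
      C a * ∑ i ∈ range (k + 1), bernsteinPolynomial ℝ k i +
        C ((b - a) / k) * ∑ i ∈ range (k + 1), i • bernsteinPolynomial ℝ k i := by
    rw [mul_sum, mul_sum, ← sum_add_distrib]
    refine sum_congr rfl fun i _ => ?_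
    rw [nsmul_eq_mul, show (i / k : ℝ) * (b - a) = (b - a) / k * i by ring, C_add, C_mul,
      map_natCast]
    ring
  rw [bern_eq_eval _ hab, hsum, bernsteinPolynomial.sum, bernsteinPolynomial.sum_smul]
  simp only [mul_one, nsmul_eq_mul, eval_add, eval_C, eval_mul, eval_natCast, eval_X]
  field_simp
  ring

theorem bern_monotoneOn {f : ℝ → ℝ} (hf : Monotone f) {a b : ℝ} (hab : a < b) (k : ℕ) :
    MonotoneOn (bern f a b k) (Icc a b) := by
  have hba : 0 < b - a := sub_pos.2 hab
  intro x hx y hy hxy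
  rw [bern_eq_eval f hab.ne, bern_eq_eval f hab.ne]
  refine monotoneOn_eval_sum_C_mul_bernsteinPolynomial (fun i j hij => hf ?_) k ?_ ?_ ?_
  · gcongr
  · exact ⟨div_nonneg (sub_nonneg.2 hx.1) hba.le, (div_le_one hba).2 (by linarith [hx.2])⟩
  · exact ⟨div_nonneg (sub_nonneg.2 hy.1) hba.le, (div_le_one hba).2 (by linarith [hy.2])⟩
  · gcongr

theorem relu_monotone : Monotone relu := fun _ _ h => max_le_max h le_rfl

theorem self_le_relu (x : ℝ) : x ≤ relu x := le_max_left x 0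

theorem relu_nonneg (x : ℝ) : 0 ≤ relu x := le_max_right x 0

theorem self_sub_relu (x : ℝ) : x - relu x = min x 0 := by
  rw [relu, ← min_sub_sub_left, sub_self, sub_zero, min_comm]

theorem monotone_sub_relu : Monotone fun y => y - relu y := fun _ _ h => by
  simpa only [self_sub_relu] using min_le_min_right 0 h

theorem bernstein_relu_taylor_model (a b : ℝ) (k : ℕ)
    (ha : a < 0) (hb : 0 < b) (hk : 1 ≤ k) :
    ∀ x ∈ Icc a b,
      (bern relu a b k x - bern relu a b k 0 / 2) - bern relu a b k 0 / 2 ≤ relu x ∧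
      relu x ≤ (bern relu a b k x - bern relu a b k 0 / 2) + bern relu a b k 0 / 2 := by
  intro x hx
  have hab : a < b := ha.trans hb
  have h0 : (0 : ℝ) ∈ Icc a b := ⟨ha.le, hb.le⟩
  have hid : ∀ y, bern (fun y => y) a b k y = y := bern_id hab.ne (by omega)
  have hupper : relu x ≤ bern relu a b k x :=
    max_le ((hid x).symm.trans_le (bern_le_bern self_le_relu k hx))
      (bern_nonneg relu_nonneg k hx)
  have hlower : bern relu a b k x - bern relu a b k 0 ≤ relu x := by
    rcases le_total x 0 with hx0 | hx0
    · have := bern_monotoneOn relu_monotone hab k hx h0 hx0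
      linarith [relu_nonneg x]
    · have := bern_monotoneOn monotone_sub_relu hab k h0 hx hx0
      rw [bern_sub, bern_sub, hid, hid] at this
      linarith [self_le_relu x]
  constructor <;> linarith
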